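/- Let w ∈ F₂ be such that |a*w| = 1 + |w| (the reduced word of w does not begin with a⁻¹; w = e is allowed). Set P = ⋃_{k≥1} B(a^k*w) and E = ⋃_{l≥1} ⋃_{k≥1} B(b^l*a^k*w). Then E ∩ P = ∅ and b⁻¹·E = E ∪ P. -/
import Mathlib


open scoped Pointwise

/-- The free group on two generators. -/
abbrev F₂ := FreeGroup Bool

/-- The generator `a`. -/
def ga : F₂ := FreeGroup.of true

/-- The generator `b`. -/
def gb : F₂ := FreeGroup.of false

/-- The word length `|w|` of an element of the free group. -/
def wl (w : F₂) : ℕ := w.toWord.length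

/-- The cylinder set `B(t)` of elements whose reduced word begins with the reduced word of `t`. -/
def cyl (t : F₂) : Set F₂ := {x | ∃ y : F₂, x = t * y ∧ wl x = wl t + wl y}

namespace StmtAux

open FreeGroup

variable {α : Type*} [DecidableEq α]

lemma red_eq_of_length {L₁ L₂ : List (α × Bool)} (h : Red L₁ L₂)
    (hl : L₁.length = L₂.length) : L₁ = L₂ :=
  (h.sublist.eq_of_length hl.symm).symm

lemma toWord_mul' (x y : FreeGroup α) :
    (x * y).toWord = reduce (x.toWord ++ y.toWord) := by
  conv_lhs => rw [← mk_toWord (x := x), ← mk_toWord (x := y), mul_mk, toWord_mk]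

lemma toWord_mul_of_length (x y : FreeGroup α)
    (h : (x * y).toWord.length = x.toWord.length + y.toWord.length) :
    (x * y).toWord = x.toWord ++ y.toWord := by
  have h1 := toWord_mul' x y
  have h2 : Red (x.toWord ++ y.toWord) ((x * y).toWord) := h1 ▸ reduce.red
  exact (red_eq_of_length h2 (by simp [h])).symm

lemma reduce_cons_self {x : α × Bool} {M : List (α × Bool)}
    (h : reduce (x :: M) = x :: M) : reduce M = M := by
  rw [reduce.cons] at h
  rcases hM : reduce M with _ | ⟨y, L⟩
  · rw [hM] at h
    have hM0 : M = [] := by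
      have := h.symm
      simp only [List.cons.injEq] at this
      exact this.2
    rw [hM0] at hM ⊢
  · rw [hM] at h
    dsimp at h
    by_cases hcond : x.1 = y.1 ∧ x.2 = !y.2
    · rw [if_pos hcond] at h
      have hlen : (reduce M).length ≤ M.length := Red.length_le reduce.red
      rw [hM, h] at hlen
      simp only [List.length_cons] at hlen
      omega
    · rw [if_neg hcond] at h
      injection h with _ h2

lemma reduced_append {A B : List (α × Bool)} (h : reduce (A ++ B) = A ++ B) :
    reduce B = B := by
  induction A with
  | nil => simpa using h
  | cons x A ih =>
    simp only [List.cons_append] at h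
    exact ih (reduce_cons_self h)

lemma reduce_cons_nocancel {L : List (α × Bool)} (h : reduce L = L) (x : α × Bool)
    (hx : ∀ y ∈ L.head?, ¬(x.1 = y.1 ∧ x.2 = !y.2)) :
    reduce (x :: L) = x :: L := by
  rw [reduce.cons, h]
  cases L with
  | nil => rfl
  | cons y t =>
    dsimp
    rw [if_neg (hx y rfl)]

lemma reduce_cons_cancel {a : α} {b : Bool} {L : List (α × Bool)}
    (h : reduce ((a, !b) :: L) = (a, !b) :: L) :
    reduce ((a, b) :: (a, !b) :: L) = L := by
  rw [reduce.cons, h]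
  simp

lemma mem_cyl_iff {t x : F₂} : x ∈ cyl t ↔ t.toWord <+: x.toWord := by
  constructor
  · rintro ⟨y, rfl, hl⟩
    rw [toWord_mul_of_length t y hl]
    exact ⟨y.toWord, rfl⟩
  · rintro ⟨u, hu⟩
    have hred : reduce (t.toWord ++ u) = t.toWord ++ u := by
      rw [hu]; exact reduce_toWord x
    have hu' : reduce u = u := reduced_append hred
    refine ⟨mk u, ?_, ?_⟩
    · rw [← mk_toWord (x := x), ← hu, ← mul_mk, mk_toWord]
    · simp [wl, ← hu, toWord_mk, hu']

variable (w : F₂) (hw : wl (ga * w) = 1 + wl w)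

include hw in
lemma redA : ∀ k, reduce (List.replicate k (true, true) ++ w.toWord)
    = List.replicate k (true, true) ++ w.toWord := by
  have hw1 : (ga * w).toWord = (true, true) :: w.toWord := by
    have := toWord_mul_of_length ga w (by
      simpa [wl, ga, toWord_of, Nat.add_comm] using hw)
    simpa [ga, toWord_of] using this
  have hw1' : reduce ((true, true) :: w.toWord) = (true, true) :: w.toWord := by
    rw [← hw1]; exact reduce_toWord _
  intro k
  induction k with
  | zero => simpa using reduce_toWord w
  | succ k ih =>
    rw [List.replicate_succ, List.cons_append]
    cases k with
    | zero => simpa using hw1'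
    | succ j =>
      refine reduce_cons_nocancel ih _ ?_
      rw [List.replicate_succ, List.cons_append]
      rintro y hy ⟨h1, h2⟩
      simp only [List.head?_cons, Option.mem_def, Option.some.injEq] at hy
      rw [← hy] at h2
      simp at h2

include hw in
lemma redB : ∀ l k, 1 ≤ k →
    reduce (List.replicate l (false, true) ++ (List.replicate k (true, true) ++ w.toWord))
    = List.replicate l (false, true) ++ (List.replicate k (true, true) ++ w.toWord) := by
  intro l
  induction l with
  | zero => intro k hk; simpa using redA w hw k
  | succ l ih =>
    intro k hk
    rw [List.replicate_succ, List.cons_append]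
    refine reduce_cons_nocancel (ih k hk) _ ?_
    cases l with
    | zero =>
      obtain ⟨j, rfl⟩ : ∃ j, k = j + 1 := ⟨k - 1, by omega⟩
      rw [List.replicate_succ]
      rintro y hy ⟨h1, h2⟩
      simp only [List.replicate_zero, List.nil_append, List.cons_append, List.head?_cons,
        Option.mem_def, Option.some.injEq] at hy
      rw [← hy] at h1
      simp at h1
    | succ m =>
      rw [List.replicate_succ, List.cons_append]
      rintro y hy ⟨h1, h2⟩
      simp only [List.head?_cons, Option.mem_def, Option.some.injEq] at hy
      rw [← hy] at h2
      simp at h2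

include hw in
lemma hA (k : ℕ) : (ga ^ k * w).toWord = List.replicate k (true, true) ++ w.toWord := by
  rw [toWord_mul', ga, toWord_of_pow]
  exact redA w hw k

include hw in
lemma hB (l k : ℕ) (hk : 1 ≤ k) :
    (gb ^ l * (ga ^ k * w)).toWord
      = List.replicate l (false, true) ++ (List.replicate k (true, true) ++ w.toWord) := by
  rw [toWord_mul', gb, toWord_of_pow, hA w hw k]
  exact redB w hw l k hk

end StmtAux

open StmtAux FreeGroup in
/-- If the reduced word of `w` does not begin with `a⁻¹`, then for
`P = ⋃_{k≥1} B(aᵏw)` and `E = ⋃_{l≥1} ⋃_{k≥1} B(bˡaᵏw)` one has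
`E ∩ P = ∅` and `b⁻¹·E = E ∪ P`. -/
theorem stmt_5 (w : F₂) (hw : wl (ga * w) = 1 + wl w) :
    (⋃ l ∈ {l : ℕ | 1 ≤ l}, ⋃ k ∈ {k : ℕ | 1 ≤ k}, cyl (gb ^ l * (ga ^ k * w))) ∩
        (⋃ k ∈ {k : ℕ | 1 ≤ k}, cyl (ga ^ k * w)) = ∅ ∧
    gb⁻¹ • (⋃ l ∈ {l : ℕ | 1 ≤ l}, ⋃ k ∈ {k : ℕ | 1 ≤ k}, cyl (gb ^ l * (ga ^ k * w))) =
      (⋃ l ∈ {l : ℕ | 1 ≤ l}, ⋃ k ∈ {k : ℕ | 1 ≤ k}, cyl (gb ^ l * (ga ^ k * w))) ∪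
        (⋃ k ∈ {k : ℕ | 1 ≤ k}, cyl (ga ^ k * w)) := by
  have memP : ∀ x : F₂, (x ∈ ⋃ k ∈ {k : ℕ | 1 ≤ k}, cyl (ga ^ k * w)) ↔
      ∃ k, 1 ≤ k ∧ List.replicate k (true, true) ++ w.toWord <+: x.toWord := by
    intro x
    simp only [Set.mem_iUnion, Set.mem_setOf_eq, exists_prop]
    exact exists_congr fun k => and_congr_right fun hk => by
      rw [mem_cyl_iff, hA w hw k]
  have memE : ∀ x : F₂,
      (x ∈ ⋃ l ∈ {l : ℕ | 1 ≤ l}, ⋃ k ∈ {k : ℕ | 1 ≤ k}, cyl (gb ^ l * (ga ^ k * w))) ↔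
      ∃ l, 1 ≤ l ∧ ∃ k, 1 ≤ k ∧
        List.replicate l (false, true) ++ (List.replicate k (true, true) ++ w.toWord)
          <+: x.toWord := by
    intro x
    simp only [Set.mem_iUnion, Set.mem_setOf_eq, exists_prop]
    refine exists_congr fun l => and_congr_right fun hl =>
      exists_congr fun k => and_congr_right fun hk => ?_
    rw [mem_cyl_iff, hB w hw l k hk]
  constructor
  · ext x
    simp only [Set.mem_inter_iff, Set.mem_empty_iff_false, iff_false]
    rintro ⟨hE, hP⟩
    rw [memE] at hE
    rw [memP] at hP
    obtain ⟨l, hl, k, hk, u, hu⟩ := hE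
    obtain ⟨k', hk', v, hv⟩ := hP
    obtain ⟨l, rfl⟩ : ∃ l', l = l' + 1 := ⟨l - 1, by omega⟩
    obtain ⟨j, rfl⟩ : ∃ j, k' = j + 1 := ⟨k' - 1, by omega⟩
    rw [List.replicate_succ, List.cons_append] at hu hv
    rw [← hv] at hu
    simp at hu
  · ext x
    rw [Set.mem_inv_smul_set_iff, smul_eq_mul, Set.mem_union, memE, memE, memP]
    have hx : (gb * x).toWord = reduce ((false, true) :: x.toWord) := by
      rw [toWord_mul']
      simp [gb, toWord_of]
    by_cases hc : ∃ t, x.toWord = (false, false) :: t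
    · obtain ⟨t, ht⟩ := hc
      have hred : (gb * x).toWord = t := by
        rw [hx, ht]
        exact reduce_cons_cancel (b := true)
          (by rw [show ((false, !true) : Bool × Bool) = (false, false) from rfl, ← ht]
              exact reduce_toWord x)
      constructor
      · rintro ⟨l, hl, k, hk, u, hu⟩
        exfalso
        rw [hred] at hu
        obtain ⟨l, rfl⟩ : ∃ l', l = l' + 1 := ⟨l - 1, by omega⟩
        rw [List.replicate_succ, List.cons_append] at hu
        have hthis := reduce_toWord x
        rw [ht, ← hu] at hthis
        exact reduce.not (L₂ := []) hthis
      · rintro (⟨l, hl, k, hk, u, hu⟩ | ⟨k, hk, u, hu⟩) <;> exfalso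
        · obtain ⟨l, rfl⟩ : ∃ l', l = l' + 1 := ⟨l - 1, by omega⟩
          rw [ht, List.replicate_succ, List.cons_append] at hu
          simp at hu
        · obtain ⟨j, rfl⟩ : ∃ j, k = j + 1 := ⟨k - 1, by omega⟩
          rw [ht, List.replicate_succ, List.cons_append] at hu
          simp at hu
    · have hhead : ∀ y ∈ x.toWord.head?,
          ¬(((false, true) : Bool × Bool).1 = y.1 ∧ ((false, true) : Bool × Bool).2 = !y.2) := by
        rintro y hy ⟨h1, h2⟩
        apply hc
        cases hL : x.toWord with
        | nil => rw [hL] at hy; simp at hy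
        | cons z t =>
          refine ⟨t, ?_⟩
          rw [hL] at hy
          simp only [List.head?_cons, Option.mem_def, Option.some.injEq] at hy
          subst hy
          obtain ⟨z1, z2⟩ := z
          dsimp at h1 h2
          cases z2
          · rw [← h1]
          · exact absurd h2 (by simp)
      have hred : (gb * x).toWord = (false, true) :: x.toWord := by
        rw [hx]
        exact reduce_cons_nocancel (reduce_toWord x) _ hhead
      rw [hred]
      constructor
      · rintro ⟨l, hl, k, hk, hu⟩
        obtain ⟨l, rfl⟩ : ∃ l', l = l' + 1 := ⟨l - 1, by omega⟩
        rw [List.replicate_succ, List.cons_append, List.cons_prefix_cons] at hu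
        obtain ⟨-, hu⟩ := hu
        rcases Nat.eq_zero_or_pos l with rfl | hl'
        · right; exact ⟨k, hk, by simpa using hu⟩
        · left; exact ⟨l, hl', k, hk, hu⟩
      · rintro (⟨l, hl, k, hk, hu⟩ | ⟨k, hk, hu⟩)
        · exact ⟨l + 1, by omega, k, hk, by
            rw [List.replicate_succ, List.cons_append, List.cons_prefix_cons]
            exact ⟨rfl, hu⟩⟩
        · exact ⟨1, le_refl 1, k, hk, by
            simpa [List.cons_prefix_cons] using hu⟩
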